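/- arXiv:1704.07264 — 9 statements merged into one kernel-verified Lean document; each statement's English description precedes it below -/
import Mathlib

section
/- If for every ε > 0 there is an ε-chain from x to y for f, then for every ε > 0 there is an ε-chain from y to x for f⁻¹. -/
open Set Filter Topology

variable {X : Type*} [MetricSpace X]

/-- An ε-chain from `x` to `y` for `f`: a sequence `x = c 0, ..., c n = y` with `n ≥ 1`
and `dist (f (c i)) (c (i+1)) < ε` for all `i < n`. -/
def EpsChain (f : X → X) (ε : ℝ) (x y : X) : Prop :=
  ∃ n : ℕ, 1 ≤ n ∧ ∃ c : ℕ → X, c 0 = x ∧ c n = y ∧ ∀ i < n, dist (f (c i)) (c (i + 1)) < ε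

/-- The chain recurrent set of `f`. -/
def ChainRecurrentSet (f : X → X) : Set X := {x | ∀ ε > 0, EpsChain f ε x x}

theorem epsChain_inverse [CompactSpace X] (f : X ≃ₜ X) (x y : X)
    (h : ∀ ε > 0, EpsChain (⇑f) ε x y) :
    ∀ ε > 0, EpsChain (⇑f.symm) ε y x := by
  intro ε hε
  have hu : UniformContinuous (⇑f.symm) :=
    CompactSpace.uniformContinuous_of_continuous f.symm.continuous
  obtain ⟨δ, hδ, hδε⟩ := Metric.uniformContinuous_iff.mp hu ε hε
  obtain ⟨n, hn, c, hc0, hcn, hc⟩ := h δ hδ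
  refine ⟨n, hn, fun i => c (n - i), by simp [hcn], by simp [hc0], fun i hi => ?_⟩
  have h1 : n - i - 1 < n := by omega
  have := hδε (hc (n - i - 1) h1)
  have h2 : n - i - 1 + 1 = n - i := by omega
  rw [h2] at this
  rw [Homeomorph.symm_apply_apply] at this
  have h3 : n - (i + 1) = n - i - 1 := by omega
  show dist (f.symm (c (n - i))) (c (n - (i + 1))) < ε
  rw [h3, dist_comm]
  exact this
end

section
/- If f : X → X is a measurable map of a compact metric space preserving a Borel probability measure μ, then the set of points that are not recurrent (i.e., points x that are not limit points of (fᵏ(x))ₖ≥₁) has μ-measure zero. -/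
open Set Filter Topology MeasureTheory

/-! A measure-preserving map of a finite measure space is conservative, and a compact metric
space is second countable, so Poincaré recurrence applies: almost every point returns to each of
its neighbourhoods infinitely often. Dropping the time-zero term does not change cluster points. -/

theorem mapClusterPt_comp_add_nat_iff {X : Type*} [TopologicalSpace X] {x : X} {u : ℕ → X}
    (k : ℕ) : MapClusterPt x atTop (fun n => u (n + k)) ↔ MapClusterPt x atTop u := by
  rw [← Function.comp_def, mapClusterPt_comp, map_add_atTop_eq_nat]

theorem MeasureTheory.Conservative.ae_mapClusterPt_iterate {X : Type*} [TopologicalSpace X]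
    [SecondCountableTopology X] [MeasurableSpace X] [OpensMeasurableSpace X] {μ : Measure X}
    {f : X → X} (h : Conservative f μ) :
    ∀ᵐ x ∂μ, MapClusterPt x atTop (fun n => f^[n] x) := by
  filter_upwards [h.ae_frequently_mem_of_mem_nhds] with x hx
  exact mapClusterPt_iff_frequently.2 hx

theorem ae_recurrent {X : Type*} [MetricSpace X] [CompactSpace X]
    [MeasurableSpace X] [BorelSpace X]
    (μ : Measure X) [IsProbabilityMeasure μ] (f : X → X) (hf : Measurable f)
    (hpres : ∀ A : Set X, MeasurableSet A → μ (f ⁻¹' A) = μ A) :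
    μ {x : X | ¬ MapClusterPt x atTop (fun k : ℕ => f^[k + 1] x)} = 0 := by
  have hmp : MeasurePreserving f μ μ :=
    ⟨hf, Measure.ext fun A hA => by rw [Measure.map_apply hf hA, hpres A hA]⟩
  rw [← ae_iff]
  filter_upwards [hmp.conservative.ae_mapClusterPt_iterate] with x hx
  exact (mapClusterPt_comp_add_nat_iff 1).2 hx
end

section
/- Suppose X is a connected compact metric space, f : X → X a homeomorphism preserving a Borel probability measure μ with μ(U) > 0 for every nonempty open U. Then for any x, y ∈ X and any ε > 0 there is an ε-chain from x to y. -/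
open Set Filter Topology

variable {X : Type*} [MetricSpace X]

lemma epsChain_trans {f : X → X} {ε : ℝ} {x w y : X}
    (h1 : EpsChain f ε x w) (h2 : EpsChain f ε w y) : EpsChain f ε x y := by
  obtain ⟨m, hm, c, hc0, hcm, hc⟩ := h1
  obtain ⟨n, hn, d, hd0, hdn, hd⟩ := h2
  refine ⟨m + n, le_add_right hm, fun k => if k ≤ m then c k else d (k - m), ?_, ?_, ?_⟩
  · simp [hc0]
  · have : ¬ (m + n ≤ m) := by omega
    simp [this, hdn]
  · intro i hi
    show dist (f (if i ≤ m then c i else d (i - m)))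
      (if i + 1 ≤ m then c (i + 1) else d (i + 1 - m)) < ε
    rcases lt_trichotomy i m with h | h | h
    · rw [if_pos h.le]
      by_cases h2 : i + 1 ≤ m
      · rw [if_pos h2]; exact hc i h
      · have hm' : i + 1 = m := by omega
        rw [if_neg h2]
        have : i + 1 - m = 0 := by omega
        rw [this, hd0, ← hcm, ← hm']
        exact hc i h
    · subst h
      rw [if_pos le_rfl, if_neg (by omega), hcm, ← hd0]
      have : i + 1 - i = 1 := by omega
      rw [this]
      exact hd 0 (by omega)
    · rw [if_neg (by omega), if_neg (by omega)]
      have : i + 1 - m = (i - m) + 1 := by omega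
      rw [this]
      exact hd (i - m) (by omega)

open MeasureTheory in
theorem epsChain_of_connected [CompactSpace X] [ConnectedSpace X]
    [MeasurableSpace X] [BorelSpace X]
    (μ : Measure X) [IsProbabilityMeasure μ]
    (hfull : ∀ U : Set X, IsOpen U → U.Nonempty → 0 < μ U)
    (f : X ≃ₜ X)
    (hpres : ∀ A : Set X, MeasurableSet A → μ ((⇑f) ⁻¹' A) = μ A) :
    ∀ x y : X, ∀ ε > 0, EpsChain (⇑f) ε x y := by
  intro x y ε hε
  have hmp : MeasurePreserving (⇑f) μ μ :=
    ⟨f.continuous.measurable, Measure.ext fun s hs => by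
      rw [Measure.map_apply f.continuous.measurable hs]; exact hpres s hs⟩
  have hcons : Conservative (⇑f) μ := hmp.conservative
  have huc : UniformContinuous (⇑f) := CompactSpace.uniformContinuous_of_continuous f.continuous
  obtain ⟨δ₀, hδ₀, hmod⟩ := Metric.uniformContinuous_iff.mp huc (ε/2) (by linarith)
  set δ := min (ε/2) (δ₀/2) with hδdef
  have hδpos : 0 < δ := lt_min (by linarith) (by linarith)
  have hδε : δ ≤ ε/2 := min_le_left _ _
  have hδ₀' : δ ≤ δ₀/2 := min_le_right _ _
  have key : ∀ w v : X, dist w v < δ → EpsChain (⇑f) ε w v := by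
    intro w v hwv
    obtain ⟨z, hz, m, hm0, hmz⟩ := hcons.exists_mem_iterate_mem
      (Metric.isOpen_ball.nullMeasurableSet)
      (hfull _ Metric.isOpen_ball ⟨v, Metric.mem_ball_self hδpos⟩).ne'
      (s := Metric.ball v δ)
    rw [Metric.mem_ball] at hz hmz
    have hwz : dist (f w) (f z) < ε/2 := by
      apply hmod
      calc dist w z ≤ dist w v + dist z v := dist_triangle_right _ _ _
        _ < δ + δ := by linarith
        _ ≤ δ₀ := by linarith
    refine ⟨m, by omega, fun k => if k = 0 then w else if k = m then v else f^[k] z, ?_, ?_, ?_⟩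
    · simp
    · simp [hm0]
    · intro i hi
      show dist (f (if i = 0 then w else if i = m then v else f^[i] z))
        (if i + 1 = 0 then w else if i + 1 = m then v else f^[i+1] z) < ε
      rw [if_neg (by omega : ¬ (i + 1 = 0))]
      rcases Nat.eq_zero_or_pos i with rfl | hipos
      · rw [if_pos rfl]
        by_cases h1 : 0 + 1 = m
        · rw [if_pos h1]
          have hz1 : dist (f^[m] z) v < δ := hmz
          rw [← h1] at hz1
          norm_num at hz1
          calc dist (f w) v ≤ dist (f w) (f z) + dist (f z) v := dist_triangle _ _ _
            _ < ε/2 + δ := by linarith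
            _ ≤ ε := by linarith
        · rw [if_neg h1]
          calc dist (f w) (f^[0+1] z) = dist (f w) (f z) := by simp
            _ < ε/2 := hwz
            _ < ε := by linarith
      · rw [if_neg (by omega : ¬ i = 0), if_neg hi.ne]
        by_cases h1 : i + 1 = m
        · rw [if_pos h1]
          calc dist (f (f^[i] z)) v = dist (f^[m] z) v := by
                rw [← h1, Function.iterate_succ_apply' f i z]
            _ < δ := hmz
            _ ≤ ε := by linarith
        · rw [if_neg h1, ← Function.iterate_succ_apply' f i z]
          simpa using hε
  set A : Set X := {p | EpsChain (⇑f) ε x p} with hA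
  have hxA : x ∈ A := key x x (by simpa using hδpos)
  have hopen : IsOpen A := by
    rw [Metric.isOpen_iff]
    intro p hp
    exact ⟨δ, hδpos, fun q hq =>
      epsChain_trans hp (key p q (by rw [Metric.mem_ball] at hq; rwa [dist_comm]))⟩
  have hclosed : IsClosed A := by
    rw [← isOpen_compl_iff, Metric.isOpen_iff]
    intro p hp
    refine ⟨δ, hδpos, fun q hq hqA => hp ?_⟩
    rw [Metric.mem_ball] at hq
    exact epsChain_trans hqA (key q p hq)
  have huniv : A = univ := IsClopen.eq_univ ⟨hclosed, hopen⟩ ⟨x, hxA⟩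
  have : y ∈ A := huniv ▸ mem_univ y
  exact this
end

section
/- The set of attractors of a homeomorphism f of a compact metric space is countable. -/
open Set Filter Topology

variable {X : Type*} [MetricSpace X]

/-- `U` is an (open) isolating neighborhood for `A`. -/
def IsIsolatingNbhd (f : X → X) (A U : Set X) : Prop :=
  IsOpen U ∧ A ⊆ U ∧ f '' closure U ⊆ U ∧ (⋂ n : ℕ, f^[n] '' closure U) = A

/-- `A` is an attractor for `f`. -/
def IsAttractor (f : X → X) (A : Set X) : Prop :=
  IsCompact A ∧ ∃ U, IsIsolatingNbhd f A U

/-- `(A, Astar)` is an attractor–repeller pair for the homeomorphism `f`. -/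
def IsDualPair (f : X ≃ₜ X) (A Astar : Set X) : Prop :=
  IsCompact A ∧ ∃ U, IsIsolatingNbhd (⇑f) A U ∧
    Astar = ⋂ n : ℕ, (⇑f)^[n] ⁻¹' closure ((closure U)ᶜ)

/-!
An attractor `A = ⋂ₙ fⁿ(cl U)` does not change when `cl U` is replaced by any set `L` with
`f(cl U) ⊆ L ⊆ cl U`. Since `f(cl U)` is a compact subset of the open set `U`, such an `L` can be
taken to be the closure of a finite union of members of a fixed countable basis, and there are
only countably many of those.
-/

theorem Set.iInter_iterate_image_eq_of_image_subset {α : Type*} (f : α → α) {K L : Set α}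
    (hKL : f '' K ⊆ L) (hLK : L ⊆ K) : ⋂ n : ℕ, f^[n] '' L = ⋂ n : ℕ, f^[n] '' K := by
  refine (iInter_mono fun n => image_mono hLK).antisymm (subset_iInter fun n => ?_)
  refine iInter_subset_of_subset (n + 1) ?_
  rw [Function.iterate_succ, image_comp]
  exact image_mono hKL

theorem TopologicalSpace.IsTopologicalBasis.exists_finite_closure_sUnion_subset
    {Y : Type*} [TopologicalSpace Y] [RegularSpace Y] {b : Set (Set Y)}
    (hb : IsTopologicalBasis b) {K U : Set Y} (hK : IsCompact K) (hU : IsOpen U) (hKU : K ⊆ U) :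
    ∃ s ⊆ b, s.Finite ∧ K ⊆ ⋃₀ s ∧ closure (⋃₀ s) ⊆ U := by
  have hcover : K ⊆ ⋃ t ∈ {t ∈ b | closure t ⊆ U}, t := fun x hx => by
    obtain ⟨t, ⟨htb, hxt⟩, htU⟩ :=
      hb.nhds_hasBasis.nhds_closure.mem_iff.mp (hU.mem_nhds (hKU hx))
    exact mem_biUnion ⟨htb, htU⟩ hxt
  obtain ⟨s, hs, hfin, hKs⟩ := hK.elim_finite_subcover_image (fun t ht => hb.isOpen ht.1) hcover
  refine ⟨s, fun t ht => (hs ht).1, hfin, by rwa [sUnion_eq_biUnion], ?_⟩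
  rw [hfin.closure_sUnion]
  exact iUnion₂_subset fun t ht => (hs ht).2

theorem IsIsolatingNbhd.exists_finite_subset_basis [CompactSpace X] {f : X → X}
    (hf : Continuous f) {b : Set (Set X)} (hb : TopologicalSpace.IsTopologicalBasis b)
    {A U : Set X} (hU : IsIsolatingNbhd f A U) :
    ∃ s ⊆ b, s.Finite ∧ ⋂ n : ℕ, f^[n] '' closure (⋃₀ s) = A := by
  obtain ⟨hUo, -, hfU, hUA⟩ := hU
  obtain ⟨s, hsb, hfin, hfUs, hsU⟩ :=
    hb.exists_finite_closure_sUnion_subset (isClosed_closure.isCompact.image hf) hUo hfU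
  refine ⟨s, hsb, hfin, ?_⟩
  rw [← hUA]
  exact iInter_iterate_image_eq_of_image_subset f (hfUs.trans subset_closure)
    (hsU.trans subset_closure)

theorem attractors_countable [CompactSpace X] (f : X ≃ₜ X) :
    {A : Set X | IsAttractor (⇑f) A}.Countable := by
  obtain ⟨b, hbc, -, hb⟩ := TopologicalSpace.exists_countable_basis X
  refine ((countable_ofPred_finite_subset hbc).image
    fun s => ⋂ n : ℕ, (⇑f)^[n] '' closure (⋃₀ s)).mono ?_
  rintro A ⟨-, U, hU⟩
  obtain ⟨s, hsb, hfin, hs⟩ := hU.exists_finite_subset_basis f.continuous hb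
  exact ⟨s, ⟨hfin, hsb⟩, hs⟩
end

section
/- If x is a point of X not contained in A ∪ A* for some attractor A with dual repeller A*, then x is not chain recurrent. -/
open Set Filter Topology

variable {X : Type*} [MetricSpace X]

lemma chain_prop (f : X → X) (hf : Continuous f) :
    ∀ (m : ℕ) (S V : Set X), IsCompact S → IsOpen V → f^[m] '' S ⊆ V →
    ∃ ε > 0, ∀ (c : ℕ → X) (j : ℕ), (∀ i, dist (f (c i)) (c (i + 1)) < ε) →
      c j ∈ S → c (j + m) ∈ V := by
  intro m
  induction m with
  | zero =>
    intro S V _ _ hsub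
    exact ⟨1, one_pos, fun c j _ hj => hsub ⟨c j, hj, rfl⟩⟩
  | succ m ih =>
    intro S V hS hV hsub
    have hT : IsCompact (f^[m] '' S) := hS.image (hf.iterate m)
    have hTV : f '' (f^[m] '' S) ⊆ V := by
      rw [← Set.image_comp, ← Function.iterate_succ']
      exact hsub
    have hfT : IsCompact (f '' (f^[m] '' S)) := hT.image hf
    obtain ⟨δ, hδ, hthick⟩ := hfT.exists_thickening_subset_open hV hTV
    have hV' : IsOpen (f ⁻¹' (Metric.thickening (δ / 2) (f '' (f^[m] '' S)))) :=
      Metric.isOpen_thickening.preimage hf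
    have hsub' : f^[m] '' S ⊆ f ⁻¹' (Metric.thickening (δ / 2) (f '' (f^[m] '' S))) :=
      by
      intro y hy
      simp only [Set.mem_preimage]
      exact Metric.self_subset_thickening (half_pos hδ) _ ⟨y, hy, rfl⟩
    obtain ⟨ε', hε', hchain⟩ := ih S (f ⁻¹' (Metric.thickening (δ / 2) (f '' (f^[m] '' S)))) hS hV' hsub'
    refine ⟨min ε' (δ / 2), lt_min hε' (by positivity), fun c j hc hj => ?_⟩
    have h2 : f (c (j + m)) ∈ Metric.thickening (δ / 2) (f '' (f^[m] '' S)) :=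
      hchain c j (fun i => lt_of_lt_of_le (hc i) (min_le_left _ _)) hj
    rw [Metric.mem_thickening_iff] at h2
    obtain ⟨w, hw, hdw⟩ := h2
    have hd : dist (f (c (j + m))) (c (j + m + 1)) < δ / 2 :=
      lt_of_lt_of_le (hc (j + m)) (min_le_right _ _)
    apply hthick
    rw [Metric.mem_thickening_iff]
    refine ⟨w, hw, ?_⟩
    calc dist (c (j + m + 1)) w
        ≤ dist (c (j + m + 1)) (f (c (j + m))) + dist (f (c (j + m))) w := dist_triangle _ _ _
      _ < δ / 2 + δ / 2 := by rw [dist_comm]; exact add_lt_add hd hdw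
      _ = δ := by ring

theorem aux_not_chainRecurrent [CompactSpace X] (f : X ≃ₜ X)
    (A Astar : Set X)
    (h : IsCompact A ∧ ∃ U, (IsOpen U ∧ A ⊆ U ∧ (⇑f) '' closure U ⊆ U ∧
      (⋂ n : ℕ, (⇑f)^[n] '' closure U) = A) ∧
      Astar = ⋂ n : ℕ, (⇑f)^[n] ⁻¹' closure ((closure U)ᶜ))
    (x : X) (hx : x ∉ A ∪ Astar)
    (hcr : ∀ ε > 0, ∃ n : ℕ, 1 ≤ n ∧ ∃ c : ℕ → X, c 0 = x ∧ c n = x ∧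
      ∀ i < n, dist (f (c i)) (c (i + 1)) < ε) : False := by
  obtain ⟨hA, U, ⟨hUopen, hAU, hfU, hInter⟩, hAstar⟩ := h
  have hf : Continuous (⇑f) := f.continuous
  have hxA : x ∉ A := fun hxa => hx (Or.inl hxa)
  have hxAs : x ∉ ⋂ n : ℕ, (⇑f)^[n] ⁻¹' closure ((closure U)ᶜ) :=
    fun hxa => hx (Or.inr (hAstar ▸ hxa))
  obtain ⟨N, hN⟩ : ∃ N, (⇑f)^[N] x ∉ closure ((closure U)ᶜ) := by
    simpa [Set.mem_iInter] using hxAs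
  obtain ⟨m, hm⟩ : ∃ m, x ∉ (⇑f)^[m] '' closure U := by
    have := hInter ▸ hxA
    simpa [Set.mem_iInter] using this
  set W : Set X := (closure ((closure U)ᶜ))ᶜ with hW
  have hWopen : IsOpen W := isClosed_closure.isOpen_compl
  have hWsub : W ⊆ closure U := by
    rw [hW, closure_compl, compl_compl]
    exact interior_subset
  have hclU : IsCompact (closure U) := isClosed_closure.isCompact
  -- three applications of chain_prop
  obtain ⟨ε₁, hε₁, hP₁⟩ := chain_prop (⇑f) hf N {x} W isCompact_singleton hWopen
    (by rw [Set.image_singleton, Set.singleton_subset_iff]; exact hN)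
  obtain ⟨ε₂, hε₂, hP₂⟩ := chain_prop (⇑f) hf 1 (closure U) U hclU hUopen
    (by rwa [Function.iterate_one])
  obtain ⟨ε₃, hε₃, hP₃⟩ := chain_prop (⇑f) hf m (closure U) {x}ᶜ hclU
    isClosed_singleton.isOpen_compl (fun y hy hxy => hm (hxy ▸ hy))
  set ε : ℝ := min ε₁ (min ε₂ ε₃) with hε
  have hεpos : 0 < ε := lt_min hε₁ (lt_min hε₂ hε₃)
  obtain ⟨n, hn, c, hc0, hcn, hchain⟩ := hcr ε hεpos
  set c' : ℕ → X := fun i => c (i % n) with hc'def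
  have hc' : ∀ i, dist (f (c' i) : X) (c' (i + 1)) < ε := by
    intro i
    have hr : i % n < n := Nat.mod_lt _ (by omega)
    have key : c' (i + 1) = c (i % n + 1) := by
      show c ((i + 1) % n) = c (i % n + 1)
      have h1 : (i % n + 1) % n = (i + 1) % n := Nat.mod_add_mod i n 1
      rcases lt_or_eq_of_le (Nat.succ_le_of_lt hr) with hlt | heq
      · rw [← h1, Nat.mod_eq_of_lt hlt]
      · have heq' : i % n + 1 = n := heq
        rw [← h1, heq', Nat.mod_self, hc0]
        exact hcn.symm
    rw [key]
    exact hchain _ hr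
  have hstay : ∀ i, c' (N + i) ∈ closure U := by
    intro i
    induction i with
    | zero =>
      have hx0 : c' 0 ∈ ({x} : Set X) := by
        show c (0 % n) ∈ _
        simp [Nat.zero_mod, hc0]
      have := hP₁ c' 0 (fun i => lt_of_lt_of_le (hc' i) (min_le_left _ _)) hx0
      rw [Nat.zero_add] at this
      exact hWsub this
    | succ i ih =>
      have := hP₂ c' (N + i)
        (fun i => lt_of_lt_of_le (hc' i) (le_trans (min_le_right _ _) (min_le_left _ _))) ih
      exact subset_closure this
  -- final contradiction
  set k : ℕ := N + m + 1 with hk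
  have hkn : N + m + 1 ≤ k * n := le_trans (by omega) (Nat.le_mul_of_pos_right k (by omega))
  set j : ℕ := k * n - m with hj
  have hjN : c' j ∈ closure U := by
    have : j = N + (j - N) := by omega
    rw [this]; exact hstay _
  have hend : c' (j + m) ∈ ({x}ᶜ : Set X) :=
    hP₃ c' j (fun i => lt_of_lt_of_le (hc' i) (le_trans (min_le_right _ _) (min_le_right _ _))) hjN
  have hjm : j + m = k * n := by omega
  have hcx : c' (k * n) = x := by
    show c (k * n % n) = x
    rw [Nat.mul_mod_left, hc0]
  rw [hjm, hcx] at hend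
  exact hend rfl

theorem not_chainRecurrent_of_not_mem_pair [CompactSpace X] (f : X ≃ₜ X)
    (A Astar : Set X) (h : IsDualPair f A Astar) (x : X) (hx : x ∉ A ∪ Astar) :
    x ∉ ChainRecurrentSet (⇑f) := by
  intro hcr
  exact aux_not_chainRecurrent f A Astar h x hx hcr
end

section
/- For any ε > 0 and x ∈ X, the set V = Ω(x, ε) of all points y such that there is an ε-chain from x to y is open and satisfies f(cl(V)) ⊂ V; consequently A = ⋂_{n≥0} fⁿ(cl(V)) is an attractor with isolating neighborhood V. -/
open Set Filter Topology

variable {X : Type*} [MetricSpace X]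

lemma epsChain_open (f : X → X) (ε : ℝ) (x : X) :
    IsOpen {y : X | EpsChain f ε x y} := by
  rw [Metric.isOpen_iff]
  rintro y ⟨n, hn, c, h0, hcn, hlt⟩
  have hn1 : n - 1 < n := Nat.sub_lt hn one_pos
  have hd : dist (f (c (n - 1))) y < ε := by
    have := hlt (n - 1) hn1
    rwa [Nat.sub_add_cancel hn, hcn] at this
  refine ⟨ε - dist (f (c (n - 1))) y, by linarith, ?_⟩
  intro y' hy'
  rw [Metric.mem_ball] at hy'
  refine ⟨n, hn, Function.update c n y', ?_, ?_, ?_⟩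
  · rw [Function.update_of_ne (by omega), h0]
  · simp
  · intro i hi
    rw [Function.update_of_ne (by omega)]
    by_cases h : i + 1 = n
    · rw [h, Function.update_self, show i = n - 1 by omega]
      have ht := dist_triangle (f (c (n - 1))) y y'
      rw [dist_comm] at hy'
      linarith
    · rw [Function.update_of_ne h]; exact hlt i hi

lemma epsChain_image (f : X → X) (hf : Continuous f) (ε : ℝ) (hε : 0 < ε) (x : X) :
    f '' closure {y : X | EpsChain f ε x y} ⊆ {y : X | EpsChain f ε x y} := by
  rintro _ ⟨y, hy, rfl⟩
  obtain ⟨δ, hδ, hδf⟩ := Metric.continuous_iff.mp hf y ε hε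
  obtain ⟨y', hy', hdy⟩ := Metric.mem_closure_iff.mp hy δ hδ
  obtain ⟨n, hn, c, h0, hcn, hlt⟩ := hy'
  refine ⟨n + 1, by omega, Function.update c (n + 1) (f y), ?_, by simp, ?_⟩
  · rw [Function.update_of_ne (by omega), h0]
  · intro i hi
    rw [Function.update_of_ne (by omega)]
    by_cases h : i + 1 = n + 1
    · have : i = n := by omega
      subst this
      rw [h, Function.update_self, hcn]
      exact hδf y' (by rwa [dist_comm] at hdy)
    · rw [Function.update_of_ne h]; exact hlt i (by omega)

theorem omega_set_isolating [CompactSpace X] (f : X ≃ₜ X) (x : X) (ε : ℝ) (hε : 0 < ε) :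
    IsOpen {y : X | EpsChain (⇑f) ε x y} ∧
    (⇑f) '' closure {y : X | EpsChain (⇑f) ε x y} ⊆ {y : X | EpsChain (⇑f) ε x y} ∧
    IsAttractor (⇑f) (⋂ n : ℕ, (⇑f)^[n] '' closure {y : X | EpsChain (⇑f) ε x y}) ∧
    IsIsolatingNbhd (⇑f) (⋂ n : ℕ, (⇑f)^[n] '' closure {y : X | EpsChain (⇑f) ε x y})
      {y : X | EpsChain (⇑f) ε x y} := by
  have hf : Continuous (⇑f) := f.continuous
  set V : Set X := {y : X | EpsChain (⇑f) ε x y} with hV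
  have hopen : IsOpen V := epsChain_open (⇑f) ε x
  have himg : (⇑f) '' closure V ⊆ V := epsChain_image (⇑f) hf ε hε x
  have hAsub : (⋂ n : ℕ, (⇑f)^[n] '' closure V) ⊆ V := by
    intro z hz
    have h1 := mem_iInter.mp hz 1
    rw [Function.iterate_one] at h1
    exact himg h1
  have hcomp : IsCompact (⋂ n : ℕ, (⇑f)^[n] '' closure V) := by
    have : ∀ n : ℕ, IsCompact ((⇑f)^[n] '' closure V) := fun n =>
      (isClosed_closure.isCompact).image (hf.iterate n)
    exact (isClosed_iInter fun n => (this n).isClosed).isCompact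
  have hiso : IsIsolatingNbhd (⇑f) (⋂ n : ℕ, (⇑f)^[n] '' closure V) V :=
    ⟨hopen, hAsub, himg, rfl⟩
  exact ⟨hopen, himg, ⟨hcomp, V, hiso⟩, hiso⟩
end

section
/- The chain recurrent set equals the intersection over all attractors of A ∪ A*: R(f) = ⋂ₙ (Aₙ ∪ Aₙ*), where {Aₙ} enumerates the attractors of f and Aₙ* are their dual repellers. -/
open Set Filter Topology

variable {X : Type*} [MetricSpace X]

/-!
If `x` is chain recurrent but lies neither in the attractor `A` nor in its dual repeller `A*`, then
the forward orbit of `x` enters the interior of `cl U`, while `x ∉ fᴹ(cl U)` for some `M`. The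
compact set `W = fᴹ(cl U)` is mapped into its interior, so sufficiently fine chains cannot leave
it; a fine periodic chain through `x` follows the orbit of `x` into `W` and then has to come back
to `x`, a contradiction.

Conversely, if `x` is not chain recurrent, some `ε`-chain fails to return to `x`. The set `P` of
points reachable from `x` by `ε`-chains is open and `f(cl P) ⊆ P`, so it is an isolating
neighbourhood of an attractor contained in `P`, hence missing `x`; and `f x ∈ P` keeps `x` out of
the dual repeller.
-/

theorem IsOpenMap.iterate {α : Type*} [TopologicalSpace α] {f : α → α} (hf : IsOpenMap f) :
    ∀ n, IsOpenMap f^[n]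
  | 0 => IsOpenMap.id
  | n + 1 => (hf.iterate n).comp hf

namespace EpsChain

variable {f : X → X} {ε : ℝ} {x y z : X}

theorem of_dist_lt (h : dist (f x) y < ε) : EpsChain f ε x y := by
  refine ⟨1, le_rfl, fun i => if i = 0 then x else y, rfl, rfl, fun i hi => ?_⟩
  obtain rfl : i = 0 := by omega
  simpa using h

theorem snoc (hxy : EpsChain f ε x y) (hyz : dist (f y) z < ε) : EpsChain f ε x z := by
  obtain ⟨n, hn, c, hc0, hcn, hc⟩ := hxy
  refine ⟨n + 1, by omega, fun i => if i ≤ n then c i else z, by simpa using hc0, by simp,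
    fun i hi => ?_⟩
  rcases (Nat.lt_succ_iff.mp hi).lt_or_eq with hin | rfl
  · simpa [hin.le, Nat.succ_le_of_lt hin] using hc i hin
  · simpa [hcn] using hyz

theorem exists_last_step (h : EpsChain f ε x z) :
    ∃ y, (y = x ∨ EpsChain f ε x y) ∧ dist (f y) z < ε := by
  obtain ⟨n, hn, c, hc0, hcn, hc⟩ := h
  refine ⟨c (n - 1), ?_, by simpa [Nat.sub_add_cancel hn, hcn] using hc (n - 1) (by omega)⟩
  rcases hn.eq_or_lt with rfl | hn
  · exact Or.inl hc0
  · exact Or.inr ⟨n - 1, by omega, c, hc0, rfl, fun i hi => hc i (by omega)⟩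

theorem exists_periodic (h : EpsChain f ε x x) :
    ∃ n ≥ 1, ∃ c : ℕ → X, (∀ k, c (k * n) = x) ∧
      ∀ i, dist (f (c i)) (c (i + 1)) < ε := by
  obtain ⟨n, hn, c, hc0, hcn, hc⟩ := h
  have hwrap : ∀ i < n, c ((i + 1) % n) = c (i + 1) := by
    intro i hi
    rcases (Nat.add_one_le_of_lt hi).lt_or_eq with hlt | heq
    · rw [Nat.mod_eq_of_lt hlt]
    · rw [heq, Nat.mod_self, hc0, hcn]
  refine ⟨n, hn, fun j => c (j % n), fun k => by simp [hc0], fun j => ?_⟩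
  have hj : j % n < n := Nat.mod_lt j hn
  simpa only [← Nat.mod_add_mod j n 1, hwrap _ hj] using hc _ hj

end EpsChain

theorem isOpen_setOf_epsChain (f : X → X) (ε : ℝ) (x : X) :
    IsOpen {y | EpsChain f ε x y} := by
  refine Metric.isOpen_iff.mpr fun z hz => ?_
  obtain ⟨y, hy, hyz⟩ := EpsChain.exists_last_step hz
  refine ⟨ε - dist (f y) z, sub_pos.mpr hyz, fun w hw => ?_⟩
  have hyw : dist (f y) w < ε := by
    calc dist (f y) w ≤ dist (f y) z + dist z w := dist_triangle _ _ _
      _ < ε := by rw [Metric.mem_ball, dist_comm] at hw; linarith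
  rcases hy with rfl | hy
  · exact EpsChain.of_dist_lt hyw
  · exact hy.snoc hyw

theorem image_closure_setOf_epsChain_subset {f : X → X} (hf : Continuous f) {ε : ℝ}
    (hε : 0 < ε) (x : X) : f '' closure {y | EpsChain f ε x y} ⊆ {y | EpsChain f ε x y} := by
  rintro _ ⟨y, hy, rfl⟩
  obtain ⟨δ, hδ, hfδ⟩ := Metric.continuousAt_iff.mp hf.continuousAt ε hε
  obtain ⟨z, hz, hyz⟩ := Metric.mem_closure_iff.mp hy δ hδ
  exact EpsChain.snoc hz (hfδ (by rwa [dist_comm]))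

theorem IsCompact.exists_pos_ball_subset_of_image_subset_interior {f : X → X} (hf : Continuous f)
    {W : Set X} (hW : IsCompact W) (hfW : f '' W ⊆ interior W) :
    ∃ ε > 0, ∀ y ∈ W, Metric.ball (f y) ε ⊆ W := by
  obtain ⟨ε, hε, hthick⟩ := (hW.image hf).exists_thickening_subset_open isOpen_interior hfW
  exact ⟨ε, hε, fun y hy z hz =>
    interior_subset (hthick (Metric.mem_thickening_iff.mpr ⟨f y, mem_image_of_mem f hy, hz⟩))⟩

theorem Continuous.exists_pos_dist_iterate_lt {f : X → X} (hf : Continuous f) (x : X) (K : ℕ) :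
    ∀ r > 0, ∃ ε > 0, ∀ c : ℕ → X, c 0 = x →
      (∀ i < K, dist (f (c i)) (c (i + 1)) < ε) → dist (c K) (f^[K] x) < r := by
  induction K with
  | zero => exact fun r hr => ⟨r, hr, fun c hc0 _ => by simpa [hc0] using hr⟩
  | succ K ih =>
    intro r hr
    obtain ⟨δ, hδ, hfδ⟩ :=
      Metric.continuousAt_iff.mp (hf.continuousAt (x := f^[K] x)) (r / 2) (half_pos hr)
    obtain ⟨ε, hε, hK⟩ := ih δ hδ
    refine ⟨min ε (r / 2), lt_min hε (half_pos hr), fun c hc0 hc => ?_⟩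
    have hcK : dist (f (c K)) (f (f^[K] x)) < r / 2 :=
      hfδ (hK c hc0 fun i hi => (hc i (by omega)).trans_le (min_le_left _ _))
    have hstep : dist (f (c K)) (c (K + 1)) < r / 2 :=
      (hc K K.lt_succ_self).trans_le (min_le_right _ _)
    calc dist (c (K + 1)) (f^[K + 1] x)
        ≤ dist (c (K + 1)) (f (c K)) + dist (f (c K)) (f (f^[K] x)) := by
          rw [Function.iterate_succ_apply']; exact dist_triangle _ _ _
      _ < r := by rw [dist_comm] at hstep; linarith

theorem mem_of_mem_chainRecurrentSet_of_iterate_mem_interior {f : X → X} (hf : Continuous f)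
    {W : Set X} (hW : IsCompact W) (hfW : f '' W ⊆ interior W) {x : X}
    (hx : x ∈ ChainRecurrentSet f) {K : ℕ} (hK : f^[K] x ∈ interior W) : x ∈ W := by
  obtain ⟨ε₁, hε₁, htrap⟩ := hW.exists_pos_ball_subset_of_image_subset_interior hf hfW
  obtain ⟨r, hr, hball⟩ := Metric.isOpen_iff.mp isOpen_interior _ hK
  obtain ⟨ε₂, hε₂, hshadow⟩ := hf.exists_pos_dist_iterate_lt x K r hr
  obtain ⟨n, hn, c, hcx, hc⟩ := (hx _ (lt_min hε₁ hε₂)).exists_periodic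
  have hcK : c K ∈ W := interior_subset <| hball <|
    hshadow c (by simpa using hcx 0) fun i _ => (hc i).trans_le (min_le_right _ _)
  have hcW : ∀ j, K ≤ j → c j ∈ W := fun j hj => by
    induction j, hj using Nat.le_induction with
    | base => exact hcK
    | succ j _ ih =>
      exact htrap _ ih (by rw [Metric.mem_ball, dist_comm]; exact (hc j).trans_le (min_le_left _ _))
  simpa [hcx] using hcW (K * n) (Nat.le_mul_of_pos_right K hn)

theorem IsDualPair.chainRecurrentSet_subset_union [CompactSpace X] {f : X ≃ₜ X}
    {A Astar : Set X} (h : IsDualPair f A Astar) : ChainRecurrentSet f ⊆ A ∪ Astar := by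
  obtain ⟨-, U, ⟨hUo, -, hfU, rfl⟩, rfl⟩ := h
  intro x hx
  by_contra hxA
  simp only [mem_union, mem_iInter, mem_preimage, closure_compl, mem_compl_iff, not_or,
    not_forall, not_not] at hxA
  obtain ⟨⟨M, hM⟩, N, hN⟩ := hxA
  have hopen : IsOpenMap f^[M] := f.isOpenMap.iterate M
  refine hM (mem_of_mem_chainRecurrentSet_of_iterate_mem_interior f.continuous
    (isClosed_closure.isCompact.image (f.continuous.iterate M)) ?_ hx (K := M + N) ?_)
  · calc f '' (f^[M] '' closure U) = f^[M] '' (f '' closure U) :=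
          (Function.Commute.self_iterate f M).set_image _
      _ ⊆ f^[M] '' interior (closure U) := image_mono (hfU.trans hUo.subset_interior_closure)
      _ ⊆ interior (f^[M] '' closure U) := hopen.image_interior_subset _
  · rw [Function.iterate_add_apply]
    exact hopen.image_interior_subset _ (mem_image_of_mem _ hN)

theorem exists_isDualPair_notMem_union [CompactSpace X] {f : X ≃ₜ X} {x : X}
    (hx : x ∉ ChainRecurrentSet f) : ∃ A Astar, IsDualPair f A Astar ∧ x ∉ A ∪ Astar := by
  simp only [ChainRecurrentSet, mem_ofPred_eq, not_forall] at hx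
  obtain ⟨ε, hε, hxx⟩ := hx
  set P := {y | EpsChain f ε x y}
  have hPo : IsOpen P := isOpen_setOf_epsChain f ε x
  have hfP : f '' closure P ⊆ P := image_closure_setOf_epsChain_subset f.continuous hε x
  have hAP : ⋂ n : ℕ, f^[n] '' closure P ⊆ P := fun y hy =>
    hfP (by simpa using mem_iInter.mp hy 1)
  have hA : IsCompact (⋂ n : ℕ, f^[n] '' closure P) :=
    (isClosed_iInter fun n =>
      (isClosed_closure.isCompact.image (f.continuous.iterate n)).isClosed).isCompact
  refine ⟨_, _, ⟨hA, P, ⟨hPo, hAP, hfP, rfl⟩, rfl⟩, ?_⟩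
  rintro (hxA | hxAstar)
  · exact hxx (hAP hxA)
  · have hfx : f x ∉ interior (closure P) := by
      simpa [closure_compl] using mem_iInter.mp hxAstar 1
    exact hfx (hPo.subset_interior_closure (EpsChain.of_dist_lt (by simpa using hε)))

theorem chainRecurrentSet_eq_iInter_pairs [CompactSpace X] (f : X ≃ₜ X) :
    ChainRecurrentSet (⇑f) =
      ⋂ A : Set X, ⋂ Astar : Set X, ⋂ _ : IsDualPair f A Astar, (A ∪ Astar) := by
  ext x
  simp only [mem_iInter]
  refine ⟨fun hx A Astar h => h.chainRecurrentSet_subset_union hx, fun hx => ?_⟩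
  by_contra hxR
  obtain ⟨A, Astar, h, hxA⟩ := exists_isDualPair_notMem_union hxR
  exact hxA (hx A Astar h)
end

section
/- Two chain recurrent points x, y are in the same chain transitive component if and only if there is no attractor A with (x ∈ A and y ∈ A*) or (y ∈ A and x ∈ A*). -/
open Set Filter Topology

variable {X : Type*} [MetricSpace X]

/-- The chain equivalence relation on the chain recurrent set. -/
def ChainEquiv (f : X → X) (x y : X) : Prop :=
  ∀ ε > 0, EpsChain f ε x y ∧ EpsChain f ε y x

/-- Glue two raw chains. -/
lemma chain_glue {f : X → X} {δ : ℝ} {a b d : X} {n m : ℕ} {c e : ℕ → X}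
    (hn : 1 ≤ n) (hc0 : c 0 = a) (hcn : c n = b)
    (hcs : ∀ i < n, dist (f (c i)) (c (i + 1)) < δ)
    (he0 : e 0 = b) (hem : e m = d)
    (hes : ∀ i < m, dist (f (e i)) (e (i + 1)) < δ) :
    ∃ g : ℕ → X, g 0 = a ∧ g (n + m) = d ∧ ∀ i < n + m, dist (f (g i)) (g (i + 1)) < δ := by
  refine ⟨fun i => if i < n then c i else e (i - n), ?_, ?_, ?_⟩
  · show (if 0 < n then c 0 else e (0 - n)) = a
    rw [if_pos (by omega), hc0]
  · show (if n + m < n then c (n + m) else e (n + m - n)) = d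
    rw [if_neg (by omega), Nat.add_sub_cancel_left, hem]
  · intro i hi
    show dist (f (if i < n then c i else e (i - n)))
      (if i + 1 < n then c (i + 1) else e (i + 1 - n)) < δ
    by_cases h1 : i < n
    · rw [if_pos h1]
      by_cases h2 : i + 1 < n
      · rw [if_pos h2]; exact hcs i h1
      · have hin : i + 1 = n := by omega
        rw [if_neg h2]
        have : e (i + 1 - n) = c (i + 1) := by
          rw [hin, Nat.sub_self, he0, hcn]
        rw [this]; exact hcs i h1
    · have h2 : ¬ (i + 1 < n) := by omega
      have h3 : i + 1 - n = (i - n) + 1 := by omega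
      rw [if_neg h1, if_neg h2, h3]
      exact hes (i - n) (by omega)

lemma EpsChain.trans {f : X → X} {ε : ℝ} {x y z : X}
    (h1 : EpsChain f ε x y) (h2 : EpsChain f ε y z) : EpsChain f ε x z := by
  obtain ⟨n, hn, c, hc0, hcn, hcs⟩ := h1
  obtain ⟨m, hm, e, he0, hem, hes⟩ := h2
  obtain ⟨g, hg⟩ := chain_glue hn hc0 hcn hcs he0 hem hes
  exact ⟨n + m, by omega, g, hg⟩

lemma epsChain_single {f : X → X} {ε : ℝ} {x y : X} (h : dist (f x) y < ε) :
    EpsChain f ε x y := by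
  refine ⟨1, le_refl 1, fun i => if i = 0 then x else y, by simp, by simp, ?_⟩
  intro i hi
  interval_cases i
  simpa using h

lemma EpsChain.append {f : X → X} {ε : ℝ} {x w z : X}
    (h1 : EpsChain f ε x w) (h2 : dist (f w) z < ε) : EpsChain f ε x z :=
  h1.trans (epsChain_single h2)

/-- A chain from y to y of length at least k. -/
lemma epsChain_long {f : X → X} {δ : ℝ} {y : X} (h : EpsChain f δ y y) (k : ℕ) :
    ∃ n, k ≤ n ∧ 1 ≤ n ∧ ∃ c : ℕ → X, c 0 = y ∧ c n = y ∧
      ∀ i < n, dist (f (c i)) (c (i + 1)) < δ := by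
  induction k with
  | zero => obtain ⟨n, hn, hc⟩ := h; exact ⟨n, Nat.zero_le n, hn, hc⟩
  | succ k ih =>
    obtain ⟨n, hkn, hn, c, hc0, hcn, hcs⟩ := ih
    obtain ⟨m, hm, e, he0, hem, hes⟩ := h
    obtain ⟨g, hg⟩ := chain_glue hn hc0 hcn hcs he0 hem hes
    exact ⟨n + m, by omega, by omega, g, hg⟩

/-- Uniform continuity on a compact space, metric form. -/
lemma unif_cont [CompactSpace X] {f : X → X} (hf : Continuous f) :
    ∀ ε > 0, ∃ δ > 0, ∀ a b : X, dist a b < δ → dist (f a) (f b) < ε := by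
  intro ε hε
  obtain ⟨δ, hδ, h⟩ := Metric.uniformContinuous_iff.mp
    (CompactSpace.uniformContinuous_of_continuous hf) ε hε
  exact ⟨δ, hδ, fun a b hab => h hab⟩

/-- Finite-time continuity: points on a δ-chain stay close to the true orbit. -/
lemma finite_time [CompactSpace X] {f : X → X} (hf : Continuous f) :
    ∀ ε > 0, ∀ n : ℕ, ∃ δ > 0, ∀ c : ℕ → X,
      (∀ i < n, dist (f (c i)) (c (i + 1)) < δ) → dist (c n) (f^[n] (c 0)) < ε := by
  intro ε hε n
  induction n generalizing ε hε with
  | zero => exact ⟨ε, hε, fun c _ => by simpa using hε⟩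
  | succ n ih =>
    obtain ⟨η, hη, hηf⟩ := unif_cont hf (ε / 2) (by linarith)
    obtain ⟨δ, hδ, hδf⟩ := ih η hη
    refine ⟨min δ (ε / 2), by positivity, fun c hc => ?_⟩
    have h1 : dist (c n) (f^[n] (c 0)) < η :=
      hδf c (fun i hi => lt_of_lt_of_le (hc i (by omega)) (min_le_left _ _))
    have h2 : dist (f (c n)) (f (f^[n] (c 0))) < ε / 2 := hηf _ _ h1
    have h3 : dist (f (c n)) (c (n + 1)) < ε / 2 :=
      lt_of_lt_of_le (hc n (by omega)) (min_le_right _ _)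
    calc dist (c (n + 1)) (f^[n + 1] (c 0))
        ≤ dist (c (n + 1)) (f (c n)) + dist (f (c n)) (f^[n + 1] (c 0)) := dist_triangle _ _ _
      _ < ε / 2 + ε / 2 := by
          rw [Function.iterate_succ_apply']
          exact add_lt_add (by rwa [dist_comm]) h2
      _ = ε := by ring

/-- If there is an attractor/neighborhood separating x from y, then no ε-chain from x to y
for some ε. -/
lemma exists_eps_no_chain [CompactSpace X] {f : X → X} (hf : Continuous f) {A U : Set X}
    (hU : IsIsolatingNbhd f A U) {x y : X} (hxA : x ∈ A)
    (hy : y ∈ closure ((closure U)ᶜ)) :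
    ∃ ε > 0, ¬ EpsChain f ε x y := by
  have hK : IsCompact (f '' closure U) :=
    (isClosed_closure.isCompact).image hf
  obtain ⟨δ, hδ, hsub⟩ := hK.exists_thickening_subset_open hU.1 hU.2.2.1
  refine ⟨δ, hδ, fun ⟨n, hn, c, hc0, hcn, hcs⟩ => ?_⟩
  have key : ∀ i ≤ n, c i ∈ closure U := by
    intro i hi
    induction i with
    | zero => rw [hc0]; exact subset_closure (hU.2.1 hxA)
    | succ i ih =>
      have hci : c i ∈ closure U := ih (by omega)
      have : c (i + 1) ∈ Metric.thickening δ (f '' closure U) :=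
        Metric.mem_thickening_iff.mpr ⟨f (c i), ⟨c i, hci, rfl⟩, by
          rw [dist_comm]; exact hcs i (by omega)⟩
      exact subset_closure (hsub this)
  -- in fact y = c n ∈ U since n ≥ 1
  have hyU : y ∈ U := by
    rcases Nat.exists_eq_add_of_le hn with ⟨k, hk⟩
    have hck : c k ∈ closure U := key k (by omega)
    have : c (k + 1) ∈ Metric.thickening δ (f '' closure U) :=
      Metric.mem_thickening_iff.mpr ⟨f (c k), ⟨c k, hck, rfl⟩, by
        rw [dist_comm]; exact hcs k (by omega)⟩
    have := hsub this
    rwa [show k + 1 = n by omega, hcn] at this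
  have : y ∈ Uᶜ := by
    have h1 : closure ((closure U)ᶜ) ⊆ Uᶜ :=
      closure_minimal (compl_subset_compl.mpr subset_closure) hU.1.isClosed_compl
    exact h1 hy
  exact this hyU

/-- From a forward iterate of a chain recurrent point, one can ε-chain back to the point. -/
lemma chain_from_iterate [CompactSpace X] (f : X ≃ₜ X) {y : X}
    (hy : y ∈ ChainRecurrentSet ⇑f) {ε : ℝ} (hε : 0 < ε) (n : ℕ) :
    EpsChain ⇑f ε ((⇑f)^[n + 1] y) y := by
  obtain ⟨η, hη, hηf⟩ := unif_cont f.continuous (ε / 2) (by linarith)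
  obtain ⟨δ, hδ, hδf⟩ := finite_time f.continuous η hη (n + 1)
  have hδ'pos : (0 : ℝ) < min δ (ε / 2) := lt_min hδ (by linarith)
  obtain ⟨M, hM, hM1, c, hc0, hcM, hcs⟩ := epsChain_long (hy _ hδ'pos) (n + 2)
  refine ⟨M - (n + 1), by omega,
    fun j => if j = 0 then (⇑f)^[n + 1] y else c (n + 1 + j), by simp, ?_, ?_⟩
  · show (if M - (n + 1) = 0 then (⇑f)^[n + 1] y else c (n + 1 + (M - (n + 1)))) = y
    rw [if_neg (by omega), show n + 1 + (M - (n + 1)) = M by omega, hcM]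
  · intro j hj
    show dist (f (if j = 0 then (⇑f)^[n + 1] y else c (n + 1 + j)))
      (if j + 1 = 0 then (⇑f)^[n + 1] y else c (n + 1 + (j + 1))) < ε
    by_cases hj0 : j = 0
    · subst hj0
      rw [if_pos rfl, if_neg (by omega)]
      have h1 : dist (c (n + 1)) ((⇑f)^[n + 1] (c 0)) < η :=
        hδf c (fun i hi => lt_of_lt_of_le (hcs i (by omega)) (min_le_left _ _))
      rw [hc0] at h1
      have h2 : dist (f (c (n + 1))) (f ((⇑f)^[n + 1] y)) < ε / 2 := hηf _ _ h1
      have h3 : dist (f (c (n + 1))) (c (n + 1 + 1)) < ε / 2 :=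
        lt_of_lt_of_le (hcs (n + 1) (by omega)) (min_le_right _ _)
      calc dist (f ((⇑f)^[n + 1] y)) (c (n + 1 + (0 + 1)))
          ≤ dist (f ((⇑f)^[n + 1] y)) (f (c (n + 1))) + dist (f (c (n + 1))) (c (n + 1 + 1)) := by
            simpa using dist_triangle (f ((⇑f)^[n + 1] y)) (f (c (n + 1))) (c (n + 1 + 1))
        _ < ε / 2 + ε / 2 := add_lt_add (by rw [dist_comm]; exact h2) h3
        _ = ε := by ring
    · rw [if_neg hj0, if_neg (by omega), show n + 1 + (j + 1) = (n + 1 + j) + 1 by omega]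
      exact lt_of_lt_of_le (hcs (n + 1 + j) (by omega))
        (le_trans (min_le_right _ _) (by linarith))

/-- Chains from a chain-recurrent point to all its backward iterates, at any scale. -/
lemma chain_to_preimage [CompactSpace X] (f : X ≃ₜ X) {x : X}
    (hx : x ∈ ChainRecurrentSet ⇑f) :
    ∀ n : ℕ, ∀ δ > 0, EpsChain ⇑f δ x ((⇑f.symm)^[n] x) := by
  intro n
  induction n with
  | zero => intro δ hδ; simpa using hx δ hδ
  | succ n ih =>
    intro ε hε
    obtain ⟨η, hη, hηf⟩ := unif_cont f.symm.continuous (ε / 2) (by linarith)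
    have hδ' : (0 : ℝ) < min η (ε / 2) := lt_min hη (by linarith)
    obtain ⟨n₁, hn₁, c₁, h10, h1n, h1s⟩ := hx _ hδ'
    obtain ⟨n₂, hn₂, c₂, h20, h2n, h2s⟩ := ih _ hδ'
    obtain ⟨c, hc0, hcm, hcs⟩ := chain_glue hn₁ h10 h1n h1s h20 h2n h2s
    have hm2 : 2 ≤ n₁ + n₂ := by omega
    set m := n₁ + n₂ with hm
    refine ⟨m - 1, by omega,
      fun i => if i < m - 1 then c i else f.symm ((⇑f.symm)^[n] x), ?_, ?_, ?_⟩
    · show (if 0 < m - 1 then c 0 else f.symm ((⇑f.symm)^[n] x)) = x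
      rw [if_pos (by omega), hc0]
    · show (if m - 1 < m - 1 then c (m - 1) else f.symm ((⇑f.symm)^[n] x)) = (⇑f.symm)^[n + 1] x
      rw [if_neg (lt_irrefl _), Function.iterate_succ_apply']
    · intro i hi
      show dist (f (if i < m - 1 then c i else f.symm ((⇑f.symm)^[n] x)))
        (if i + 1 < m - 1 then c (i + 1) else f.symm ((⇑f.symm)^[n] x)) < ε
      by_cases h2 : i + 1 < m - 1
      · rw [if_pos (by omega), if_pos h2]
        exact lt_of_lt_of_le (hcs i (by omega))
          (le_trans (min_le_right _ _) (by linarith))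
      · have hieq : i + 1 = m - 1 := by omega
        rw [if_pos (by omega), if_neg (by omega)]
        have hlast : dist (f (c (m - 1))) ((⇑f.symm)^[n] x) < η := by
          have h := hcs (m - 1) (by omega)
          rw [show m - 1 + 1 = m by omega, hcm] at h
          exact lt_of_lt_of_le h (min_le_left _ _)
        have h4 : dist (c (m - 1)) (f.symm ((⇑f.symm)^[n] x)) < ε / 2 := by
          have h := hηf _ _ hlast
          rwa [f.symm_apply_apply] at h
        have h5 : dist (f (c i)) (c (m - 1)) < ε / 2 := by
          have h := hcs i (by omega)
          rw [hieq] at h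
          exact lt_of_lt_of_le h (min_le_right _ _)
        calc dist (f (c i)) (f.symm ((⇑f.symm)^[n] x))
            ≤ dist (f (c i)) (c (m - 1)) + dist (c (m - 1)) (f.symm ((⇑f.symm)^[n] x)) :=
              dist_triangle _ _ _
          _ < ε / 2 + ε / 2 := add_lt_add h5 h4
          _ = ε := by ring

/-- If there is no ε-chain from x to y, one can build a dual pair separating them. -/
lemma separating_attractor [CompactSpace X] (f : X ≃ₜ X) {x y : X}
    (hx : x ∈ ChainRecurrentSet ⇑f) (hy : y ∈ ChainRecurrentSet ⇑f)
    {ε : ℝ} (hε : 0 < ε) (hno : ¬ EpsChain ⇑f ε x y) :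
    ∃ A Astar : Set X, IsDualPair f A Astar ∧ x ∈ A ∧ y ∈ Astar := by
  set Ω : Set X := {z | EpsChain ⇑f ε x z} with hΩ
  have hopen : IsOpen Ω := by
    rw [Metric.isOpen_iff]
    intro z hz
    obtain ⟨n, hn, c, hc0, hcn, hcs⟩ := hz
    have hlt : dist (f (c (n - 1))) z < ε := by
      have h := hcs (n - 1) (by omega)
      rwa [show n - 1 + 1 = n by omega, hcn] at h
    refine ⟨ε - dist (f (c (n - 1))) z, by linarith, fun z' hz' => ?_⟩
    rw [Metric.mem_ball] at hz'
    refine ⟨n, hn, fun i => if i < n then c i else z', ?_, ?_, ?_⟩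
    · show (if 0 < n then c 0 else z') = x
      rw [if_pos (by omega), hc0]
    · show (if n < n then c n else z') = z'
      rw [if_neg (lt_irrefl n)]
    · intro i hi
      show dist (f (if i < n then c i else z')) (if i + 1 < n then c (i + 1) else z') < ε
      by_cases h2 : i + 1 < n
      · rw [if_pos (by omega), if_pos h2]; exact hcs i hi
      · rw [if_pos hi, if_neg h2]
        have hieq : i = n - 1 := by omega
        subst hieq
        calc dist (f (c (n - 1))) z'
            ≤ dist (f (c (n - 1))) z + dist z z' := dist_triangle _ _ _
          _ < dist (f (c (n - 1))) z + (ε - dist (f (c (n - 1))) z) := by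
              rw [dist_comm z z']; linarith
          _ = ε := by ring
  have hfwd : ⇑f '' closure Ω ⊆ Ω := by
    rintro _ ⟨z, hz, rfl⟩
    obtain ⟨η, hη, hηf⟩ := unif_cont f.continuous ε hε
    obtain ⟨w, hw, hwz⟩ := Metric.mem_closure_iff.mp hz η hη
    have hst : dist (f w) (f z) < ε := hηf w z (by rwa [dist_comm] at hwz)
    exact EpsChain.append hw hst
  set A : Set X := ⋂ n : ℕ, (⇑f)^[n] '' closure Ω with hA
  have hAcomp : IsCompact A := by
    have hcl : IsClosed A :=
      isClosed_iInter (fun n =>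
        ((isClosed_closure.isCompact).image (f.continuous.iterate n)).isClosed)
    exact hcl.isCompact
  have hxA : x ∈ A := by
    rw [hA, mem_iInter]
    intro n
    refine ⟨(⇑f.symm)^[n] x, subset_closure (chain_to_preimage f hx n ε hε), ?_⟩
    exact (Function.LeftInverse.iterate f.apply_symm_apply n) x
  have hyn : ∀ n : ℕ, (⇑f)^[n] y ∉ closure Ω := by
    intro n hmem
    have h1 : ⇑f ((⇑f)^[n] y) ∈ Ω := hfwd ⟨_, hmem, rfl⟩
    rw [← Function.iterate_succ_apply' (⇑f) n y] at h1
    exact hno (EpsChain.trans h1 (chain_from_iterate f hy hε n))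
  refine ⟨A, ⋂ n : ℕ, (⇑f)^[n] ⁻¹' closure ((closure Ω)ᶜ),
    ⟨hAcomp, Ω, ⟨hopen, ?_, hfwd, hA.symm⟩, rfl⟩, hxA, ?_⟩
  · intro z hz
    have h1 : z ∈ (⇑f)^[1] '' closure Ω := (mem_iInter.mp hz) 1
    rw [Function.iterate_one] at h1
    exact hfwd h1
  · rw [mem_iInter]
    intro n
    exact subset_closure (hyn n)

theorem chainEquiv_iff_no_separating_attractor [CompactSpace X] (f : X ≃ₜ X)
    (x y : X) (hx : x ∈ ChainRecurrentSet (⇑f)) (hy : y ∈ ChainRecurrentSet (⇑f)) :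
    ChainEquiv (⇑f) x y ↔
      ¬ ∃ A Astar : Set X, IsDualPair f A Astar ∧
        ((x ∈ A ∧ y ∈ Astar) ∨ (y ∈ A ∧ x ∈ Astar)) := by
  constructor
  · rintro hch ⟨A, As, ⟨hAc, U, hU, hAs⟩, hcase⟩
    rcases hcase with ⟨hxA, hyAs⟩ | ⟨hyA, hxAs⟩
    · have hy0 : y ∈ closure ((closure U)ᶜ) := by
        rw [hAs, mem_iInter] at hyAs
        simpa using hyAs 0
      obtain ⟨ε₀, hε₀, hnc⟩ := exists_eps_no_chain f.continuous hU hxA hy0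
      exact hnc ((hch ε₀ hε₀).1)
    · have hx0 : x ∈ closure ((closure U)ᶜ) := by
        rw [hAs, mem_iInter] at hxAs
        simpa using hxAs 0
      obtain ⟨ε₀, hε₀, hnc⟩ := exists_eps_no_chain f.continuous hU hyA hx0
      exact hnc ((hch ε₀ hε₀).2)
  · intro hno ε hε
    by_contra hcon
    rw [not_and_or] at hcon
    rcases hcon with h | h
    · obtain ⟨A, As, hdp, hxA, hyAs⟩ := separating_attractor f hx hy hε h
      exact hno ⟨A, As, hdp, Or.inl ⟨hxA, hyAs⟩⟩
    · obtain ⟨A, As, hdp, hyA, hxAs⟩ := separating_attractor f hy hx hε h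
      exact hno ⟨A, As, hdp, Or.inr ⟨hyA, hxAs⟩⟩
end

section
/- For each attractor–repeller pair (A, A*) of f there is a continuous function g : X → [0,1] with g⁻¹(0) = A, g⁻¹(1) = A*, and g(f(x)) < g(x) for every x ∈ X \ (A ∪ A*). -/
open Set Filter Topology

variable {X : Type*} [MetricSpace X]

/-!
Metric spaces are perfectly normal, so some continuous `h : X → [0, 1]` has `h⁻¹(0) = A` and
`h⁻¹(1) = A*`. The orbit supremum `s x = ⨆ n, h (fⁿ x)` is a weak Lyapunov function: `s ∘ f ≤ s`,
`s⁻¹(0) = A`, `s⁻¹(1) = A*`. Off `A*` some iterate of a whole neighbourhood of `x` lies in the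
trapping region, so all later iterates stay uniformly close to `A`; hence `s` is locally a finite
maximum up to `ε` (so continuous), `s < 1` there, and off `A ∪ A*` the value of `s` eventually
drops along the orbit. The weighted orbit average `g x = ∑ 2⁻ⁿ⁻¹ s (fⁿ x)` turns this eventual
drop into `g (f x) < g x`.
-/

section

variable {Y : Type*} [TopologicalSpace Y]

structure PreciselySeparates (h : Y → ℝ) (s t : Set Y) : Prop where
  continuous : Continuous h
  mem_Icc : ∀ y, h y ∈ Icc (0 : ℝ) 1
  preimage_zero : h ⁻¹' {0} = s
  preimage_one : h ⁻¹' {1} = t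

theorem PreciselySeparates.eq_zero_iff {h : Y → ℝ} {s t : Set Y} (hh : PreciselySeparates h s t)
    {y : Y} : h y = 0 ↔ y ∈ s := by
  rw [← hh.preimage_zero, mem_preimage, mem_singleton_iff]

theorem PreciselySeparates.eq_one_iff {h : Y → ℝ} {s t : Set Y} (hh : PreciselySeparates h s t)
    {y : Y} : h y = 1 ↔ y ∈ t := by
  rw [← hh.preimage_one, mem_preimage, mem_singleton_iff]

theorem exists_preciselySeparates [PerfectlyNormalSpace Y] {s t : Set Y} (hs : IsClosed s)
    (ht : IsClosed t) (hst : Disjoint s t) : ∃ h : Y → ℝ, PreciselySeparates h s t := by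
  obtain ⟨u, rfl, hu⟩ := perfectlyNormalSpace_iff_forall_isClosed_preimage_zero.1 ‹_› s hs
  obtain ⟨v, rfl, hv⟩ := perfectlyNormalSpace_iff_forall_isClosed_preimage_zero.1 ‹_› t ht
  have hpos : ∀ y, 0 < u y + v y := by
    intro y
    by_contra! hle
    have hu0 : u y = 0 := by linarith [(hu y).1, (hv y).1]
    have hv0 : v y = 0 := by linarith [(hu y).1, (hv y).1]
    exact hst.notMem_of_mem_left (a := y) hu0 hv0
  refine ⟨fun y => u y / (u y + v y),
    u.continuous.div (u.continuous.add v.continuous) fun y => (hpos y).ne', fun y =>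
      ⟨div_nonneg (hu y).1 (hpos y).le, (div_le_one (hpos y)).2 (le_add_of_nonneg_right (hv y).1)⟩,
    ?_, ?_⟩
  · ext y
    simp [(hpos y).ne']
  · ext y
    simp [div_eq_one_iff_eq (hpos y).ne']

theorem continuous_iSup_of_forall_le_partialSups_add {F : ℕ → Y → ℝ}
    (hF : ∀ n, Continuous (F n)) (hbdd : ∀ y, BddAbove (range fun n => F n y))
    (happrox : ∀ y, ∀ ε > 0, ∃ M, ∀ᶠ z in 𝓝 y, ∀ n, F n z ≤ partialSups (F · z) M + ε) :
    Continuous fun y => ⨆ n, F n y := by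
  refine continuous_iff_continuousAt.2 fun y =>
    continuousAt_of_locally_uniform_approx_of_continuousAt fun u hu => ?_
  obtain ⟨ε, hε, hεu⟩ := Metric.mem_uniformity_dist.1 hu
  obtain ⟨M, hM⟩ := happrox y (ε / 2) (half_pos hε)
  refine ⟨_, hM, fun z => partialSups (F · z) M,
    (Continuous.partialSups_apply fun k _ => hF k).continuousAt, fun z hz => hεu ?_⟩
  have hle : partialSups (F · z) M ≤ ⨆ n, F n z :=
    partialSups_le _ _ _ fun n _ => le_ciSup (hbdd z) n
  have hge : ⨆ n, F n z ≤ partialSups (F · z) M + ε / 2 := ciSup_le hz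
  rw [Real.dist_eq, abs_lt]
  constructor <;> linarith

end

section Orbit

variable {α : Type*} {f : α → α}

noncomputable def orbitSup (f : α → α) (h : α → ℝ) (x : α) : ℝ := ⨆ n, h (f^[n] x)

section OrbitSup

variable {h : α → ℝ}

theorem bddAbove_range_apply_iterate (h1 : ∀ x, h x ≤ 1) (x : α) :
    BddAbove (range fun n => h (f^[n] x)) :=
  ⟨1, forall_mem_range.2 fun _ => h1 _⟩

theorem le_orbitSup (h1 : ∀ x, h x ≤ 1) (x : α) (n : ℕ) : h (f^[n] x) ≤ orbitSup f h x :=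
  le_ciSup (bddAbove_range_apply_iterate h1 x) n

theorem orbitSup_apply_le (h1 : ∀ x, h x ≤ 1) (x : α) : orbitSup f h (f x) ≤ orbitSup f h x :=
  ciSup_le fun n => by simpa only [Function.iterate_succ_apply] using le_orbitSup h1 x (n + 1)

theorem orbitSup_mem_Icc (h01 : ∀ x, h x ∈ Icc (0 : ℝ) 1) (x : α) :
    orbitSup f h x ∈ Icc (0 : ℝ) 1 :=
  ⟨(h01 x).1.trans (le_orbitSup (fun y => (h01 y).2) x 0), ciSup_le fun _ => (h01 _).2⟩

theorem orbitSup_eq_zero_iff (h01 : ∀ x, h x ∈ Icc (0 : ℝ) 1) {x : α} :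
    orbitSup f h x = 0 ↔ ∀ n, h (f^[n] x) = 0 :=
  ⟨fun h0 n => le_antisymm (h0 ▸ le_orbitSup (fun y => (h01 y).2) x n) (h01 _).1,
    fun h0 => by simp [orbitSup, h0]⟩

end OrbitSup

noncomputable def orbitAverage (f : α → α) (s : α → ℝ) (x : α) : ℝ :=
  ∑' n, 1 / 2 / 2 ^ n * s (f^[n] x)

section OrbitAverage

variable {s : α → ℝ}

theorem summable_orbitAverage (hs : ∀ x, s x ∈ Icc (0 : ℝ) 1) (x : α) :
    Summable fun n => 1 / 2 / 2 ^ n * s (f^[n] x) :=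
  (summable_geometric_two' 1).of_nonneg_of_le (fun _ => mul_nonneg (by positivity) (hs _).1)
    fun _ => mul_le_of_le_one_right (by positivity) (hs _).2

theorem continuous_orbitAverage [TopologicalSpace α] (hf : Continuous f) (hs : Continuous s)
    (hs01 : ∀ x, s x ∈ Icc (0 : ℝ) 1) : Continuous (orbitAverage f s) :=
  continuous_tsum (fun n => continuous_const.mul (hs.comp (hf.iterate n)))
    (summable_geometric_two' 1)
    fun n x => by
      rw [Real.norm_eq_abs, abs_of_nonneg (mul_nonneg (by positivity) (hs01 _).1)]
      exact mul_le_of_le_one_right (by positivity) (hs01 _).2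

theorem orbitAverage_eq_zero_iff (hs : ∀ x, s x ∈ Icc (0 : ℝ) 1) {x : α} :
    orbitAverage f s x = 0 ↔ ∀ n, s (f^[n] x) = 0 := by
  refine ⟨fun h0 n => ?_, fun h0 => by simp [orbitAverage, h0]⟩
  have hle := (summable_orbitAverage (f := f) hs x).le_tsum n fun j _ =>
    mul_nonneg (by positivity) (hs _).1
  rw [← orbitAverage, h0] at hle
  exact le_antisymm (nonpos_of_mul_nonpos_right hle (by positivity)) (hs _).1

theorem orbitAverage_eq_one_iff (hs : ∀ x, s x ∈ Icc (0 : ℝ) 1) {x : α} :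
    orbitAverage f s x = 1 ↔ ∀ n, s (f^[n] x) = 1 := by
  refine ⟨fun h1 => ?_, fun h1 => by simp only [orbitAverage, h1, mul_one, tsum_geometric_two' 1]⟩
  by_contra! hne
  obtain ⟨n, hn⟩ := hne
  have hlt : orbitAverage f s x < 1 := (tsum_geometric_two' 1) ▸
    (summable_orbitAverage hs x).tsum_lt_tsum (i := n)
      (fun j => mul_le_of_le_one_right (by positivity) (hs _).2)
      (mul_lt_of_lt_one_right (by positivity) (lt_of_le_of_ne (hs _).2 hn))
      (summable_geometric_two' 1)
  exact hlt.ne h1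

theorem orbitAverage_mem_Icc (hs : ∀ x, s x ∈ Icc (0 : ℝ) 1) (x : α) :
    orbitAverage f s x ∈ Icc (0 : ℝ) 1 :=
  ⟨tsum_nonneg fun _ => mul_nonneg (by positivity) (hs _).1,
    (tsum_geometric_two' 1) ▸ (summable_orbitAverage hs x).tsum_le_tsum
      (fun _ => mul_le_of_le_one_right (by positivity) (hs _).2) (summable_geometric_two' 1)⟩

theorem orbitAverage_apply_lt (hs : ∀ x, s x ∈ Icc (0 : ℝ) 1) (hsf : ∀ x, s (f x) ≤ s x) {x : α}
    {M : ℕ} (hM : s (f^[M] x) < s x) : orbitAverage f s (f x) < orbitAverage f s x := by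
  obtain ⟨n, hn⟩ : ∃ n, s (f^[n + 1] x) < s (f^[n] x) := by
    by_contra! hmono
    exact hM.not_ge (monotone_nat_of_le_succ hmono (Nat.zero_le M))
  simp only [orbitAverage, ← Function.iterate_succ_apply]
  refine (summable_orbitAverage hs (f x)).tsum_lt_tsum (i := n) (fun j => ?_)
    (mul_lt_mul_of_pos_left hn (by positivity)) (summable_orbitAverage hs x)
  exact mul_le_mul_of_nonneg_left (by simpa only [Function.iterate_succ_apply'] using hsf _)
    (by positivity)

theorem PreciselySeparates.orbitAverage [TopologicalSpace α] {Z₀ Z₁ : Set α}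
    (hs : PreciselySeparates s Z₀ Z₁) (hf : Continuous f) (h₀ : MapsTo f Z₀ Z₀)
    (h₁ : MapsTo f Z₁ Z₁) : PreciselySeparates (orbitAverage f s) Z₀ Z₁ := by
  refine ⟨continuous_orbitAverage hf hs.continuous hs.mem_Icc, orbitAverage_mem_Icc hs.mem_Icc,
    ?_, ?_⟩
  · ext x
    simp only [mem_preimage, mem_singleton_iff, orbitAverage_eq_zero_iff hs.mem_Icc,
      hs.eq_zero_iff]
    exact ⟨fun hx => hx 0, fun hx n => h₀.iterate n hx⟩
  · ext x
    simp only [mem_preimage, mem_singleton_iff, orbitAverage_eq_one_iff hs.mem_Icc,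
      hs.eq_one_iff]
    exact ⟨fun hx => hx 0, fun hx n => h₁.iterate n hx⟩

end OrbitAverage

end Orbit

section TrappingRegion

variable {Y : Type*} [TopologicalSpace Y] {f : Y → Y} {U : Set Y}

def attractorOf (f : Y → Y) (U : Set Y) : Set Y := ⋂ n : ℕ, f^[n] '' closure U

def repellerOf (f : Y → Y) (U : Set Y) : Set Y := ⋂ n : ℕ, f^[n] ⁻¹' closure (closure U)ᶜ

theorem antitone_iterate_image_closure (hfU : f '' closure U ⊆ U) :
    Antitone fun n => f^[n] '' closure U :=
  antitone_nat_of_succ_le fun n => by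
    rw [Function.iterate_succ, image_comp]
    exact image_mono (hfU.trans subset_closure)

theorem isClosed_attractorOf [CompactSpace Y] [T2Space Y] (hf : Continuous f) :
    IsClosed (attractorOf f U) :=
  isClosed_iInter fun n => (isClosed_closure.isCompact.image (hf.iterate n)).isClosed

theorem isClosed_repellerOf (hf : Continuous f) : IsClosed (repellerOf f U) :=
  isClosed_iInter fun n => isClosed_closure.preimage (hf.iterate n)

theorem mapsTo_attractorOf (hfU : f '' closure U ⊆ U) :
    MapsTo f (attractorOf f U) (attractorOf f U) := by
  intro x hx
  refine mem_iInter.2 fun n => antitone_iterate_image_closure hfU n.le_succ ?_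
  show f x ∈ f^[n + 1] '' closure U
  rw [Function.iterate_succ', image_comp]
  exact mem_image_of_mem f (mem_iInter.1 hx n)

theorem closure_compl_closure_subset_compl (hU : IsOpen U) : closure (closure U)ᶜ ⊆ Uᶜ :=
  closure_minimal (compl_subset_compl.2 subset_closure) hU.isClosed_compl

theorem apply_mem_repellerOf_iff (hU : IsOpen U) (hfU : f '' closure U ⊆ U) {x : Y} :
    f x ∈ repellerOf f U ↔ x ∈ repellerOf f U := by
  have hback : f x ∈ closure (closure U)ᶜ → x ∈ closure (closure U)ᶜ := fun hfx =>
    subset_closure fun hx => closure_compl_closure_subset_compl hU hfx (hfU (mem_image_of_mem f hx))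
  simp only [repellerOf, mem_iInter, mem_preimage, ← Function.iterate_succ_apply]
  refine ⟨fun h n => ?_, fun h n => h (n + 1)⟩
  cases n with
  | zero => exact hback (h 0)
  | succ n => exact h n

theorem mapsTo_repellerOf (hU : IsOpen U) (hfU : f '' closure U ⊆ U) :
    MapsTo f (repellerOf f U) (repellerOf f U) :=
  fun _ hx => (apply_mem_repellerOf_iff hU hfU).2 hx

theorem iterate_mem_repellerOf_iff (hU : IsOpen U) (hfU : f '' closure U ⊆ U) {x : Y} (n : ℕ) :
    f^[n] x ∈ repellerOf f U ↔ x ∈ repellerOf f U := by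
  induction n with
  | zero => rfl
  | succ n ih => rw [Function.iterate_succ_apply', apply_mem_repellerOf_iff hU hfU, ih]

theorem disjoint_attractorOf_repellerOf (hU : IsOpen U) (hfU : f '' closure U ⊆ U) :
    Disjoint (attractorOf f U) (repellerOf f U) := by
  refine disjoint_left.2 fun x hxA hxR =>
    closure_compl_closure_subset_compl hU (mem_iInter.1 hxR 0) (hfU ?_)
  simpa using mem_iInter.1 hxA 1

theorem exists_iterate_image_closure_subset [CompactSpace Y] [T2Space Y] (hf : Continuous f)
    (hfU : f '' closure U ⊆ U) {O : Set Y} (hO : IsOpen O) (hAO : attractorOf f U ⊆ O) :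
    ∃ k, f^[k] '' closure U ⊆ O :=
  exists_subset_nhds_of_isCompact (antitone_iterate_image_closure hfU).directed_ge
    (fun n => isClosed_closure.isCompact.image (hf.iterate n)) fun _ hx => hO.mem_nhds (hAO hx)

theorem eventually_forall_ge_iterate_mem [CompactSpace Y] [T2Space Y] (hf : Continuous f)
    (hfU : f '' closure U ⊆ U) {x : Y} (hx : x ∉ repellerOf f U) {O : Set Y} (hO : IsOpen O)
    (hAO : attractorOf f U ⊆ O) : ∃ M, ∀ᶠ y in 𝓝 x, ∀ n ≥ M, f^[n] y ∈ O := by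
  obtain ⟨N, hN⟩ : ∃ N, f^[N] x ∉ closure (closure U)ᶜ := by simpa [repellerOf] using hx
  obtain ⟨k, hk⟩ := exists_iterate_image_closure_subset hf hfU hO hAO
  have hnhds : f^[N] ⁻¹' (closure (closure U)ᶜ)ᶜ ∈ 𝓝 x :=
    (isClosed_closure.isOpen_compl.preimage (hf.iterate N)).mem_nhds hN
  refine ⟨k + N, eventually_of_mem hnhds fun y hy n hn => ?_⟩
  obtain ⟨m, rfl⟩ : ∃ m, n = m + N := ⟨n - N, by omega⟩
  have hyC : f^[N] y ∈ closure U := not_not.1 fun h => hy (subset_closure h)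
  rw [Function.iterate_add_apply]
  exact hk (antitone_iterate_image_closure hfU (by omega : k ≤ m) (mem_image_of_mem _ hyC))

variable {h : Y → ℝ}

theorem eventually_forall_ge_apply_iterate_lt [CompactSpace Y] [T2Space Y] (hf : Continuous f)
    (hfU : f '' closure U ⊆ U) (hh : PreciselySeparates h (attractorOf f U) (repellerOf f U))
    {x : Y} (hx : x ∉ repellerOf f U) {ε : ℝ} (hε : 0 < ε) :
    ∃ M, ∀ᶠ y in 𝓝 x, ∀ n ≥ M, h (f^[n] y) < ε :=
  eventually_forall_ge_iterate_mem hf hfU hx (isOpen_Iio.preimage hh.continuous) fun y hy => by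
    rwa [mem_preimage, hh.eq_zero_iff.2 hy, mem_Iio]

theorem orbitSup_lt_one [CompactSpace Y] [T2Space Y] (hf : Continuous f) (hU : IsOpen U)
    (hfU : f '' closure U ⊆ U) (hh : PreciselySeparates h (attractorOf f U) (repellerOf f U))
    {x : Y} (hx : x ∉ repellerOf f U) : orbitSup f h x < 1 := by
  obtain ⟨M, hM⟩ := eventually_forall_ge_apply_iterate_lt hf hfU hh hx one_half_pos
  obtain ⟨j, -, hj⟩ := exists_partialSups_eq (fun n => h (f^[n] x)) M
  have hlt : h (f^[j] x) < 1 := lt_of_le_of_ne (hh.mem_Icc _).2 fun h1 =>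
    hx ((iterate_mem_repellerOf_iff hU hfU j).1 (hh.eq_one_iff.1 h1))
  have hle : orbitSup f h x ≤ max (partialSups (fun n => h (f^[n] x)) M) (1 / 2) :=
    ciSup_le fun n => by
      rcases le_total n M with hn | hn
      · exact le_max_of_le_left (le_partialSups_of_le (fun n => h (f^[n] x)) hn)
      · exact le_max_of_le_right (hM.self_of_nhds n hn).le
  exact hle.trans_lt (max_lt (hj ▸ hlt) (by norm_num))

theorem continuous_orbitSup [CompactSpace Y] [T2Space Y] (hf : Continuous f)
    (hfU : f '' closure U ⊆ U) (hh : PreciselySeparates h (attractorOf f U) (repellerOf f U)) :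
    Continuous (orbitSup f h) := by
  have h1 : ∀ y, h y ≤ 1 := fun y => (hh.mem_Icc y).2
  refine continuous_iSup_of_forall_le_partialSups_add (fun n => hh.continuous.comp (hf.iterate n))
    (bddAbove_range_apply_iterate h1) fun x ε hε => ?_
  by_cases hx : x ∈ repellerOf f U
  · refine ⟨0, ?_⟩
    have hnear : ∀ᶠ y in 𝓝 x, 1 - ε < h y :=
      hh.continuous.continuousAt.eventually (lt_mem_nhds (by rw [hh.eq_one_iff.2 hx]; linarith))
    filter_upwards [hnear] with y hy n
    rw [partialSups_zero, Function.iterate_zero_apply]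
    linarith [h1 (f^[n] y)]
  · obtain ⟨M, hM⟩ := eventually_forall_ge_apply_iterate_lt hf hfU hh hx hε
    refine ⟨M, ?_⟩
    filter_upwards [hM] with y hy n
    have hP : 0 ≤ partialSups (fun n => h (f^[n] y)) M :=
      (hh.mem_Icc y).1.trans (le_partialSups_of_le (fun n => h (f^[n] y)) (Nat.zero_le M))
    rcases le_total n M with hn | hn
    · exact (le_partialSups_of_le (fun n => h (f^[n] y)) hn).trans (le_add_of_nonneg_right hε.le)
    · linarith [hy n hn]

theorem PreciselySeparates.orbitSup [CompactSpace Y] [T2Space Y]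
    (hh : PreciselySeparates h (attractorOf f U) (repellerOf f U)) (hf : Continuous f)
    (hU : IsOpen U) (hfU : f '' closure U ⊆ U) :
    PreciselySeparates (orbitSup f h) (attractorOf f U) (repellerOf f U) := by
  refine ⟨continuous_orbitSup hf hfU hh, orbitSup_mem_Icc hh.mem_Icc, ?_, ?_⟩
  · ext x
    simp only [mem_preimage, mem_singleton_iff, orbitSup_eq_zero_iff hh.mem_Icc, hh.eq_zero_iff]
    exact ⟨fun hx => hx 0, fun hx n => (mapsTo_attractorOf hfU).iterate n hx⟩
  · ext x
    refine ⟨fun h1 => by_contra fun hx => (orbitSup_lt_one hf hU hfU hh hx).ne h1,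
      fun hx => le_antisymm (orbitSup_mem_Icc hh.mem_Icc x).2 ?_⟩
    exact (hh.eq_one_iff.2 hx).symm.le.trans (le_orbitSup (fun y => (hh.mem_Icc y).2) x 0)

theorem exists_orbitSup_iterate_lt [CompactSpace Y] [T2Space Y] (hf : Continuous f)
    (hfU : f '' closure U ⊆ U) (hh : PreciselySeparates h (attractorOf f U) (repellerOf f U))
    {x : Y} (hxA : x ∉ attractorOf f U) (hxR : x ∉ repellerOf f U) :
    ∃ M, orbitSup f h (f^[M] x) < orbitSup f h x := by
  have hpos : 0 < orbitSup f h x :=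
    (lt_of_le_of_ne (hh.mem_Icc x).1 (Ne.symm (mt hh.eq_zero_iff.1 hxA))).trans_le
      (le_orbitSup (fun y => (hh.mem_Icc y).2) x 0)
  obtain ⟨M, hM⟩ := eventually_forall_ge_apply_iterate_lt hf hfU hh hxR (half_pos hpos)
  refine ⟨M, (ciSup_le fun n => ?_).trans_lt (half_lt_self hpos)⟩
  rw [← Function.iterate_add_apply]
  exact (hM.self_of_nhds (n + M) (Nat.le_add_left M n)).le

end TrappingRegion

theorem exists_lyapunov_pair [CompactSpace X] (f : X ≃ₜ X) (A Astar : Set X)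
    (h : IsDualPair f A Astar) :
    ∃ g : X → ℝ, Continuous g ∧ (∀ x, g x ∈ Set.Icc (0:ℝ) 1) ∧
      g ⁻¹' {0} = A ∧ g ⁻¹' {1} = Astar ∧
      ∀ x ∉ A ∪ Astar, g (f x) < g x := by
  obtain ⟨-, U, ⟨hU, -, hfU, rfl⟩, rfl⟩ := h
  obtain ⟨h, hh⟩ := exists_preciselySeparates (isClosed_attractorOf f.continuous)
    (isClosed_repellerOf f.continuous) (disjoint_attractorOf_repellerOf hU hfU)
  have hs := hh.orbitSup f.continuous hU hfU
  have hg := hs.orbitAverage f.continuous (mapsTo_attractorOf hfU) (mapsTo_repellerOf hU hfU)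
  refine ⟨_, hg.continuous, hg.mem_Icc, hg.preimage_zero, hg.preimage_one, fun x hx => ?_⟩
  rw [mem_union, not_or] at hx
  obtain ⟨M, hM⟩ := exists_orbitSup_iterate_lt f.continuous hfU hh hx.1 hx.2
  exact orbitAverage_apply_lt hs.mem_Icc (orbitSup_apply_le fun y => (hh.mem_Icc y).2) hM
end
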